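/- arXiv:2603.15466 — 8 statements merged into one kernel-verified Lean document; each statement's English description precedes it below -/
import Mathlib

section
/- Let α ∈ ℂ with |α| ≥ 1/2 and α ≠ 1. Then the orbit of 1/α under T_α is well-defined and converges to 0. Consequently the Tandelbrot set 𝒯 is contained in the open disk {α ∈ ℂ : |α| < 1/2}. -/
open Filter

/-- The model family `T_α(z) = (e^{(α−1)z/8} − 1)/(α e^{(α−1)z/8} − 1)`,
as a total function with the convention that division by zero yields 0. -/
noncomputable def T (α z : ℂ) : ℂ :=
  (Complex.exp ((α - 1) * z / 8) - 1) / (α * Complex.exp ((α - 1) * z / 8) - 1)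

/-- The orbit of `z` under `T_α` is well-defined: no iterate hits a pole. -/
def orbitWD (α z : ℂ) : Prop :=
  ∀ n : ℕ, α * Complex.exp ((α - 1) * ((T α)^[n] z) / 8) ≠ 1

/-- The Tandelbrot set. -/
noncomputable def Tandelbrot : Set ℂ :=
  {0} ∪ {α : ℂ | α ≠ 0 ∧ α ≠ 1 ∧
    ¬ (orbitWD α (1 / α) ∧
       Tendsto (fun n => (T α)^[n] (1 / α)) atTop (nhds 0))}

lemma key_step (α z : ℂ) (hα : 1/2 ≤ ‖α‖) (hα1 : α ≠ 1)
    (hz : ‖z‖ ≤ 1 / ‖α‖) :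
    α * Complex.exp ((α - 1) * z / 8) ≠ 1 ∧
    ‖T α z‖ ≤ ‖z‖ / 2 := by
  have ha : (0:ℝ) < ‖α‖ := by linarith
  have hd : (0:ℝ) < ‖α - 1‖ := by
    simpa [sub_eq_zero] using (norm_pos_iff.mpr (sub_ne_zero.mpr hα1))
  set u : ℂ := (α - 1) * z / 8 with hu
  have haz : ‖α‖ * ‖z‖ ≤ 1 := by
    have := (le_div_iff₀ ha).mp hz
    linarith [this, mul_comm (‖z‖) (‖α‖)]
  have habsu : ‖u‖ = ‖α - 1‖ * ‖z‖ / 8 := by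
    simp [hu, norm_mul, norm_div]
  have hd3 : ‖α - 1‖ ≤ 3 * ‖α‖ := by
    have := norm_sub_le α 1
    simp at this
    linarith
  have hu1 : ‖u‖ ≤ 1 := by
    rw [habsu]
    have : ‖α - 1‖ * ‖z‖ ≤ 3 := by
      calc ‖α - 1‖ * ‖z‖ ≤ 3 * ‖α‖ * ‖z‖ := by
            apply mul_le_mul_of_nonneg_right hd3 (norm_nonneg _)
        _ ≤ 3 * 1 := by rw [mul_assoc]; exact mul_le_mul_of_nonneg_left haz (by norm_num)
        _ = 3 := by norm_num
    linarith
  have hE : ‖Complex.exp u - 1‖ ≤ 2 * ‖u‖ :=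
    Complex.norm_exp_sub_one_le hu1
  have hden : 3/4 * ‖α - 1‖ ≤ ‖α * Complex.exp u - 1‖ := by
    have heq : α * Complex.exp u - 1 = (α - 1) + α * (Complex.exp u - 1) := by ring
    have h1 : ‖α * (Complex.exp u - 1)‖ ≤ ‖α - 1‖ / 4 := by
      rw [norm_mul]
      calc ‖α‖ * ‖Complex.exp u - 1‖
          ≤ ‖α‖ * (2 * ‖u‖) := by
            exact mul_le_mul_of_nonneg_left hE (norm_nonneg _)
        _ ≤ ‖α - 1‖ / 4 := by
            rw [habsu]
            nlinarith [norm_nonneg z, norm_nonneg (α-1)]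
    calc 3/4 * ‖α - 1‖
        ≤ ‖α - 1‖ - ‖α * (Complex.exp u - 1)‖ := by linarith
      _ ≤ ‖(α - 1) + α * (Complex.exp u - 1)‖ := by
          have h2 := norm_add_le (α - 1 + α * (Complex.exp u - 1))
            (-(α * (Complex.exp u - 1)))
          rw [add_neg_cancel_right, norm_neg] at h2
          linarith
      _ = ‖α * Complex.exp u - 1‖ := by rw [← heq]
  constructor
  · intro h
    rw [show (1:ℂ) = 1 by rfl] at h
    have : ‖α * Complex.exp u - 1‖ = 0 := by rw [h]; simp
    linarith
  · have hdpos : (0:ℝ) < ‖α * Complex.exp u - 1‖ := by linarith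
    rw [show T α z = (Complex.exp u - 1) / (α * Complex.exp u - 1) from rfl, norm_div]
    calc ‖Complex.exp u - 1‖ / ‖α * Complex.exp u - 1‖
        ≤ (2 * ‖u‖) / (3/4 * ‖α - 1‖) := by
          apply div_le_div₀ (by positivity) hE (by linarith) hden
      _ ≤ ‖z‖ / 2 := by
          rw [habsu]
          rw [div_le_div_iff₀ (by linarith) (by norm_num)]
          nlinarith [norm_nonneg z]

/-- For `|α| ≥ 1/2`, `α ≠ 1`, the orbit of `1/α` under `T_α` is well-defined
and converges to `0`; consequently the Tandelbrot set is contained in the open disk of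
radius `1/2`. -/
theorem orbit_of_inv_tendsto_zero_of_half_le_abs :
    (∀ α : ℂ, 1 / 2 ≤ ‖α‖ → α ≠ 1 →
      orbitWD α (1 / α) ∧
      Tendsto (fun n => (T α)^[n] (1 / α)) atTop (nhds 0)) ∧
    Tandelbrot ⊆ Metric.ball (0 : ℂ) (1 / 2) := by
  have main : ∀ α : ℂ, 1 / 2 ≤ ‖α‖ → α ≠ 1 →
      orbitWD α (1 / α) ∧
      Tendsto (fun n => (T α)^[n] (1 / α)) atTop (nhds 0) := by
    intro α hα hα1
    have ha : (0:ℝ) < ‖α‖ := by linarith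
    have hbound : ∀ n : ℕ,
        ‖(T α)^[n] (1/α)‖ ≤ (1/2)^n * (1 / ‖α‖) := by
      intro n
      induction n with
      | zero => simp [norm_div]
      | succ n ih =>
        have hle1 : ‖(T α)^[n] (1/α)‖ ≤ 1 / ‖α‖ := by
          have hp : ((1:ℝ)/2)^n ≤ 1 := pow_le_one₀ (by norm_num) (by norm_num)
          have : ((1:ℝ)/2)^n * (1 / ‖α‖) ≤ 1 * (1 / ‖α‖) :=
            mul_le_mul_of_nonneg_right hp (by positivity)
          linarith
        have hk := key_step α _ hα hα1 hle1
        rw [Function.iterate_succ_apply']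
        calc ‖T α ((T α)^[n] (1/α))‖
            ≤ ‖(T α)^[n] (1/α)‖ / 2 := hk.2
          _ ≤ (1/2)^(n+1) * (1 / ‖α‖) := by
              rw [pow_succ]
              linarith
    have hle : ∀ n : ℕ, ‖(T α)^[n] (1/α)‖ ≤ 1 / ‖α‖ := by
      intro n
      have hp : ((1:ℝ)/2)^n ≤ 1 := pow_le_one₀ (by norm_num) (by norm_num)
      have : ((1:ℝ)/2)^n * (1 / ‖α‖) ≤ 1 * (1 / ‖α‖) :=
        mul_le_mul_of_nonneg_right hp (by positivity)
      linarith [hbound n]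
    refine ⟨fun n => (key_step α _ hα hα1 (hle n)).1, ?_⟩
    rw [tendsto_zero_iff_norm_tendsto_zero]
    apply squeeze_zero (fun n => norm_nonneg _)
      (fun n => by simpa using hbound n)
    have h2 : Tendsto (fun n : ℕ => ((1:ℝ)/2)^n) atTop (nhds 0) :=
      tendsto_pow_atTop_nhds_zero_of_lt_one (by norm_num) (by norm_num)
    simpa using h2.mul_const (1 / ‖α‖)
  refine ⟨main, ?_⟩
  intro α hmem
  rw [Metric.mem_ball, dist_zero_right]
  rcases hmem with h0 | ⟨_, h1, hnot⟩
  · rw [Set.mem_singleton_iff] at h0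
    simp [h0]
  · by_contra h
    push_neg at h
    exact hnot (main α h h1)
end

section
/- Let α ∈ ℂ with α ∉ {0, 1}. Then for every z ∈ ℂ: (a) α·exp((α−1)(z/α)/8) = 1 if and only if (1/α)·exp((1/α − 1)z/8) = 1 (the poles correspond under the linear map L(w) = αw); and (b) if these quantities are different from 1, then α·T_α(z/α) = T_{1/α}(z). In other words, the linear map L(w) = αw conjugates T_α to T_{1/α}. -/
open Filter

lemma aux_pole_iff (α E : ℂ) (hα0 : α ≠ 0) (hEne : E ≠ 0) :
    α * E = 1 ↔ (1 / α) * E⁻¹ = 1 := by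
  rw [one_div, ← mul_inv, inv_eq_one]

lemma aux_conj (α E : ℂ) (hα0 : α ≠ 0) (hEne : E ≠ 0)
    (h1 : α * E - 1 ≠ 0) (h2 : (1 / α) * E⁻¹ - 1 ≠ 0) :
    α * ((E - 1) / (α * E - 1)) = (E⁻¹ - 1) / ((1 / α) * E⁻¹ - 1) := by
  rw [mul_div_assoc', div_eq_div_iff h1 h2]
  field_simp
  ring

/-- The linear map `L(w) = αw` conjugates `T_α` to `T_{1/α}`: poles correspond
under `L`, and away from poles `α·T_α(z/α) = T_{1/α}(z)`. -/
theorem linear_conjugacy_T_inv (α : ℂ) (hα0 : α ≠ 0) (hα1 : α ≠ 1) (z : ℂ) :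
    (α * Complex.exp ((α - 1) * (z / α) / 8) = 1 ↔
      (1 / α) * Complex.exp ((1 / α - 1) * z / 8) = 1) ∧
    (α * Complex.exp ((α - 1) * (z / α) / 8) ≠ 1 →
      (1 / α) * Complex.exp ((1 / α - 1) * z / 8) ≠ 1 →
      α * T α (z / α) = T (1 / α) z) := by
  have hE : Complex.exp ((1 / α - 1) * z / 8) =
      (Complex.exp ((α - 1) * (z / α) / 8))⁻¹ := by
    rw [← Complex.exp_neg]
    congr 1
    field_simp
    ring
  have hEne : Complex.exp ((α - 1) * (z / α) / 8) ≠ 0 := Complex.exp_ne_zero _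
  unfold T
  rw [hE]
  generalize Complex.exp ((α - 1) * (z / α) / 8) = E at hEne ⊢
  refine ⟨aux_pole_iff α E hα0 hEne, fun h1 h2 => ?_⟩
  exact aux_conj α E hα0 hEne (sub_ne_zero.mpr h1) (sub_ne_zero.mpr h2)
end

section
/- Let α₁, α₂ ∈ ℂ ∖ {0, 1}, let a ∈ ℂ with a ≠ 0 and b ∈ ℂ, and suppose that for every z ∈ ℂ such that z is not a pole of T_{α₁} and a·z + b is not a pole of T_{α₂} one has a·T_{α₁}(z) + b = T_{α₂}(a·z + b) (i.e. the affine map A(z) = az + b conjugates T_{α₁} to T_{α₂}). Then α₂ = α₁ or α₂ = 1/α₁. -/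
open Filter

open Complex

/-- derivative step for a 4-term exponential combination -/
lemma deriv_comb4 (A B C D p q r s : ℂ)
    (h : ∀ z : ℂ, A * Complex.exp (p*z) + B * Complex.exp (q*z) + C * Complex.exp (r*z)
        + D * Complex.exp (s*z) = 0) :
    ∀ z : ℂ, A*p * Complex.exp (p*z) + B*q * Complex.exp (q*z) + C*r * Complex.exp (r*z)
        + D*s * Complex.exp (s*z) = 0 := by
  intro z
  have h1 : HasDerivAt (fun z : ℂ => A * Complex.exp (p*z) + B * Complex.exp (q*z)
      + C * Complex.exp (r*z) + D * Complex.exp (s*z))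
      (A * (Complex.exp (p*z) * p) + B * (Complex.exp (q*z) * q) + C * (Complex.exp (r*z) * r)
        + D * (Complex.exp (s*z) * s)) z := by
    have := ((((((hasDerivAt_id z).const_mul p).cexp).const_mul A).add
      ((((hasDerivAt_id z).const_mul q).cexp).const_mul B)).add
      ((((hasDerivAt_id z).const_mul r).cexp).const_mul C)).add
      ((((hasDerivAt_id z).const_mul s).cexp).const_mul D)
    simp at this; exact this
  have h2 : HasDerivAt (fun z : ℂ => A * Complex.exp (p*z) + B * Complex.exp (q*z)
      + C * Complex.exp (r*z) + D * Complex.exp (s*z)) 0 z := by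
    have : (fun z : ℂ => A * Complex.exp (p*z) + B * Complex.exp (q*z)
      + C * Complex.exp (r*z) + D * Complex.exp (s*z)) = fun _ => (0:ℂ) := funext h
    rw [this]; exact hasDerivAt_const z 0
  linear_combination h1.unique h2

lemma exp3_indep (A B C p q r : ℂ) (hpq : p ≠ q) (hpr : p ≠ r) (hqr : q ≠ r)
    (h : ∀ z : ℂ, A * Complex.exp (p*z) + B * Complex.exp (q*z) + C * Complex.exp (r*z) = 0) :
    A = 0 ∧ B = 0 ∧ C = 0 := by
  have h0 : ∀ z : ℂ, A * Complex.exp (p*z) + B * Complex.exp (q*z) + C * Complex.exp (r*z)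
      + 0 * Complex.exp (0*z) = 0 := by
    intro z; rw [zero_mul, add_zero]; exact h z
  have h1 := deriv_comb4 A B C 0 p q r 0 h0
  have h2 := deriv_comb4 (A*p) (B*q) (C*r) (0*0) p q r 0 h1
  have e0 := h 0
  have e1 := h1 0
  have e2 := h2 0
  simp only [mul_zero, Complex.exp_zero, mul_one] at e0 e1 e2
  have hA : A * ((p-q)*(p-r)) = 0 := by linear_combination e2 - (q+r)*e1 + (q*r)*e0
  have hB : B * ((q-p)*(q-r)) = 0 := by linear_combination e2 - (p+r)*e1 + (p*r)*e0
  have hC : C * ((r-p)*(r-q)) = 0 := by linear_combination e2 - (p+q)*e1 + (p*q)*e0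
  refine ⟨?_, ?_, ?_⟩
  · rcases mul_eq_zero.mp hA with h | h
    · exact h
    · rcases mul_eq_zero.mp h with h | h
      · exact absurd (sub_eq_zero.mp h) hpq
      · exact absurd (sub_eq_zero.mp h) hpr
  · rcases mul_eq_zero.mp hB with h | h
    · exact h
    · rcases mul_eq_zero.mp h with h | h
      · exact absurd (sub_eq_zero.mp h).symm hpq
      · exact absurd (sub_eq_zero.mp h) hqr
  · rcases mul_eq_zero.mp hC with h | h
    · exact h
    · rcases mul_eq_zero.mp h with h | h
      · exact absurd (sub_eq_zero.mp h).symm hpr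
      · exact absurd (sub_eq_zero.mp h).symm hqr

lemma exp4_indep (A B C D p q r s : ℂ) (hpq : p ≠ q) (hpr : p ≠ r) (hps : p ≠ s)
    (hqr : q ≠ r) (hqs : q ≠ s) (hrs : r ≠ s)
    (h : ∀ z : ℂ, A * Complex.exp (p*z) + B * Complex.exp (q*z) + C * Complex.exp (r*z)
        + D * Complex.exp (s*z) = 0) :
    A = 0 ∧ B = 0 ∧ C = 0 ∧ D = 0 := by
  have h1 := deriv_comb4 A B C D p q r s h
  have h2 := deriv_comb4 (A*p) (B*q) (C*r) (D*s) p q r s h1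
  have h3 := deriv_comb4 (A*p*p) (B*q*q) (C*r*r) (D*s*s) p q r s h2
  have e0 := h 0
  have e1 := h1 0
  have e2 := h2 0
  have e3 := h3 0
  simp only [mul_zero, Complex.exp_zero, mul_one] at e0 e1 e2 e3
  have hA : A * ((p-q)*((p-r)*(p-s))) = 0 := by
    linear_combination e3 - (q+r+s)*e2 + (q*r+q*s+r*s)*e1 - (q*r*s)*e0
  have hB : B * ((q-p)*((q-r)*(q-s))) = 0 := by
    linear_combination e3 - (p+r+s)*e2 + (p*r+p*s+r*s)*e1 - (p*r*s)*e0
  have hC : C * ((r-p)*((r-q)*(r-s))) = 0 := by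
    linear_combination e3 - (p+q+s)*e2 + (p*q+p*s+q*s)*e1 - (p*q*s)*e0
  have hD : D * ((s-p)*((s-q)*(s-r))) = 0 := by
    linear_combination e3 - (p+q+r)*e2 + (p*q+p*r+q*r)*e1 - (p*q*r)*e0
  have npq := sub_ne_zero.mpr hpq
  have npr := sub_ne_zero.mpr hpr
  have nps := sub_ne_zero.mpr hps
  have nqr := sub_ne_zero.mpr hqr
  have nqs := sub_ne_zero.mpr hqs
  have nrs := sub_ne_zero.mpr hrs
  have nqp := sub_ne_zero.mpr hpq.symm
  have nrp := sub_ne_zero.mpr hpr.symm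
  have nrq := sub_ne_zero.mpr hqr.symm
  have nsp := sub_ne_zero.mpr hps.symm
  have nsq := sub_ne_zero.mpr hqs.symm
  have nsr := sub_ne_zero.mpr hrs.symm
  refine ⟨?_, ?_, ?_, ?_⟩
  · rcases mul_eq_zero.mp hA with h | h
    · exact h
    · exact absurd h (mul_ne_zero npq (mul_ne_zero npr nps))
  · rcases mul_eq_zero.mp hB with h | h
    · exact h
    · exact absurd h (mul_ne_zero nqp (mul_ne_zero nqr nqs))
  · rcases mul_eq_zero.mp hC with h | h
    · exact h
    · exact absurd h (mul_ne_zero nrp (mul_ne_zero nrq nrs))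
  · rcases mul_eq_zero.mp hD with h | h
    · exact h
    · exact absurd h (mul_ne_zero nsp (mul_ne_zero nsq nsr))

lemma countable_expEq (c : ℂ) (hc : c ≠ 0) (u : ℂ) :
    {t : ℝ | Complex.exp (c * t) = u}.Countable := by
  by_cases hex : ∃ t₀ : ℝ, Complex.exp (c * t₀) = u
  · obtain ⟨t₀, ht₀⟩ := hex
    have hsub : {t : ℝ | Complex.exp (c * t) = u} ⊆
        ⋃ n : ℤ, {t : ℝ | (t : ℂ) = t₀ + n * (2 * Real.pi * Complex.I) / c} := by
      intro t ht
      have h1 : Complex.exp (c * t - c * t₀) = 1 := by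
        rw [Complex.exp_sub, ht, ht₀, div_self]
        rw [← ht₀]; exact Complex.exp_ne_zero _
      obtain ⟨n, hn⟩ := Complex.exp_eq_one_iff.mp h1
      refine Set.mem_iUnion.mpr ⟨n, ?_⟩
      show (t : ℂ) = t₀ + n * (2 * Real.pi * Complex.I) / c
      field_simp
      linear_combination hn
    refine Set.Countable.mono hsub (Set.countable_iUnion fun n => ?_)
    refine Set.Subsingleton.countable fun x hx y hy => ?_
    have : (x : ℂ) = (y : ℂ) := by rw [Set.mem_setOf_eq] at hx hy; rw [hx, hy]
    exact_mod_cast this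
  · convert Set.countable_empty
    rw [Set.eq_empty_iff_forall_notMem]
    intro t ht
    exact hex ⟨t, ht⟩


/-- If an affine map `A(z) = az + b` (with `a ≠ 0`) conjugates `T_{α₁}` to
`T_{α₂}` away from poles, then `α₂ = α₁` or `α₂ = 1/α₁`. -/
theorem affine_conjugacy_classes (α₁ α₂ : ℂ) (h₁0 : α₁ ≠ 0) (h₁1 : α₁ ≠ 1)
    (h₂0 : α₂ ≠ 0) (h₂1 : α₂ ≠ 1) (a b : ℂ) (ha : a ≠ 0)
    (hconj : ∀ z : ℂ, α₁ * Complex.exp ((α₁ - 1) * z / 8) ≠ 1 →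
      α₂ * Complex.exp ((α₂ - 1) * (a * z + b) / 8) ≠ 1 →
      a * T α₁ z + b = T α₂ (a * z + b)) :
    α₂ = α₁ ∨ α₂ = 1 / α₁ := by
  have hc1 : ((α₁ - 1) / 8 : ℂ) ≠ 0 := div_ne_zero (sub_ne_zero.mpr h₁1) (by norm_num)
  have hc2 : ((α₂ - 1) / 8 : ℂ) ≠ 0 := div_ne_zero (sub_ne_zero.mpr h₂1) (by norm_num)
  have hc2a : ((α₂ - 1) / 8 * a : ℂ) ≠ 0 := mul_ne_zero hc2 ha
  -- Step 1: the cross-multiplied identity holds off the poles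
  have hF0 : ∀ z : ℂ, α₁ * Complex.exp ((α₁ - 1) * z / 8) ≠ 1 →
      α₂ * Complex.exp ((α₂ - 1) * (a * z + b) / 8) ≠ 1 →
      (a * (Complex.exp ((α₁ - 1) * z / 8) - 1) + b * (α₁ * Complex.exp ((α₁ - 1) * z / 8) - 1))
          * (α₂ * Complex.exp ((α₂ - 1) * (a * z + b) / 8) - 1)
        - (Complex.exp ((α₂ - 1) * (a * z + b) / 8) - 1)
          * (α₁ * Complex.exp ((α₁ - 1) * z / 8) - 1) = 0 := by
    intro z h1 h2
    have h := hconj z h1 h2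
    rw [T, T] at h
    have d1 : α₁ * Complex.exp ((α₁ - 1) * z / 8) - 1 ≠ 0 := sub_ne_zero.mpr h1
    have d2 : α₂ * Complex.exp ((α₂ - 1) * (a * z + b) / 8) - 1 ≠ 0 := sub_ne_zero.mpr h2
    field_simp at h
    linear_combination h
  -- Step 2: by continuity and countability of the pole set, the identity holds everywhere
  have hFall : ∀ z : ℂ,
      (a * (Complex.exp ((α₁ - 1) * z / 8) - 1) + b * (α₁ * Complex.exp ((α₁ - 1) * z / 8) - 1))
          * (α₂ * Complex.exp ((α₂ - 1) * (a * z + b) / 8) - 1)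
        - (Complex.exp ((α₂ - 1) * (a * z + b) / 8) - 1)
          * (α₁ * Complex.exp ((α₁ - 1) * z / 8) - 1) = 0 := by
    intro z₀
    set S : Set ℝ := {t : ℝ | α₁ * Complex.exp ((α₁ - 1) * (z₀ + t) / 8) = 1 ∨
        α₂ * Complex.exp ((α₂ - 1) * (a * (z₀ + t) + b) / 8) = 1} with hSdef
    have hS : S.Countable := by
      have hsub : S ⊆ {t : ℝ | Complex.exp ((α₁ - 1) / 8 * t)
            = (α₁ * Complex.exp ((α₁ - 1) * z₀ / 8))⁻¹}
          ∪ {t : ℝ | Complex.exp ((α₂ - 1) / 8 * a * t)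
            = (α₂ * Complex.exp ((α₂ - 1) * (a * z₀ + b) / 8))⁻¹} := by
        intro t ht
        rcases ht with h | h
        · left
          show Complex.exp ((α₁ - 1) / 8 * t) = _
          refine eq_inv_of_mul_eq_one_right ?_
          rw [mul_assoc, ← Complex.exp_add,
            show (α₁ - 1) * z₀ / 8 + (α₁ - 1) / 8 * t = (α₁ - 1) * (z₀ + t) / 8 from by ring]
          exact h
        · right
          show Complex.exp ((α₂ - 1) / 8 * a * t) = _
          refine eq_inv_of_mul_eq_one_right ?_
          rw [mul_assoc, ← Complex.exp_add,
            show (α₂ - 1) * (a * z₀ + b) / 8 + (α₂ - 1) / 8 * a * t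
              = (α₂ - 1) * (a * (z₀ + t) + b) / 8 from by ring]
          exact h
      exact Set.Countable.mono hsub
        ((countable_expEq _ hc1 _).union (countable_expEq _ hc2a _))
    have hdense : Dense Sᶜ := hS.dense_compl ℝ
    have hcont : Continuous fun t : ℝ =>
        (a * (Complex.exp ((α₁ - 1) * (z₀ + t) / 8) - 1)
            + b * (α₁ * Complex.exp ((α₁ - 1) * (z₀ + t) / 8) - 1))
          * (α₂ * Complex.exp ((α₂ - 1) * (a * (z₀ + t) + b) / 8) - 1)
        - (Complex.exp ((α₂ - 1) * (a * (z₀ + t) + b) / 8) - 1)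
          * (α₁ * Complex.exp ((α₁ - 1) * (z₀ + t) / 8) - 1) := by fun_prop
    have heq := Continuous.ext_on hdense hcont continuous_const (g := fun _ => (0 : ℂ))
      (fun t ht => by
        simp only [hSdef, Set.mem_compl_iff, Set.mem_setOf_eq, not_or] at ht
        exact hF0 (z₀ + t) ht.1 ht.2)
    have h0 := congrFun heq 0
    simpa using h0
  -- Step 3: rewrite as a linear combination of four exponentials
  have key : ∀ z : ℂ,
      (Complex.exp ((α₂ - 1) * b / 8) * ((a + b * α₁) * α₂ - α₁))
          * Complex.exp (((α₁ - 1) / 8 + (α₂ - 1) / 8 * a) * z)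
        + (α₁ - (a + b * α₁)) * Complex.exp ((α₁ - 1) / 8 * z)
        + (Complex.exp ((α₂ - 1) * b / 8) * (1 - (a + b) * α₂))
          * Complex.exp ((α₂ - 1) / 8 * a * z)
        + ((a + b) - 1) * Complex.exp ((0 : ℂ) * z) = 0 := by
    intro z
    have h := hFall z
    rw [show (α₁ - 1) * z / 8 = (α₁ - 1) / 8 * z from by ring,
      show (α₂ - 1) * (a * z + b) / 8 = (α₂ - 1) / 8 * a * z + (α₂ - 1) * b / 8 from by ring,
      Complex.exp_add] at h
    rw [show ((α₁ - 1) / 8 + (α₂ - 1) / 8 * a) * z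
        = (α₁ - 1) / 8 * z + (α₂ - 1) / 8 * a * z from by ring,
      Complex.exp_add, zero_mul, Complex.exp_zero]
    linear_combination h
  -- Step 4: case analysis on the exponents
  by_cases hcase1 : (α₂ - 1) / 8 * a = (α₁ - 1) / 8
  · have key3 : ∀ z : ℂ,
        (Complex.exp ((α₂ - 1) * b / 8) * ((a + b * α₁) * α₂ - α₁))
            * Complex.exp (((α₁ - 1) / 8 + (α₁ - 1) / 8) * z)
          + ((α₁ - (a + b * α₁)) + Complex.exp ((α₂ - 1) * b / 8) * (1 - (a + b) * α₂))
            * Complex.exp ((α₁ - 1) / 8 * z)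
          + ((a + b) - 1) * Complex.exp ((0 : ℂ) * z) = 0 := by
      intro z
      have h := key z
      rw [hcase1] at h
      linear_combination h
    obtain ⟨hA, -, hD⟩ := exp3_indep _ _ _ _ _ _
      (fun h => hc1 (by linear_combination h))
      (fun h => hc1 (by linear_combination h / 2))
      hc1 key3
    have h1 : (a + b * α₁) * α₂ - α₁ = 0 := by
      rcases mul_eq_zero.mp hA with h | h
      · exact absurd h (Complex.exp_ne_zero _)
      · exact h
    have hlin : (α₂ - 1) * a - (α₁ - 1) = 0 := by linear_combination 8 * hcase1
    have final : (α₂ - α₁) * (α₁ * α₂ - 1) = 0 := by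
      linear_combination (α₂ - 1) * h1 - α₁ * α₂ * (α₂ - 1) * hD - α₂ * (1 - α₁) * hlin
    rcases mul_eq_zero.mp final with h | h
    · exact Or.inl (sub_eq_zero.mp h)
    · refine Or.inr ?_
      rw [eq_div_iff h₁0]
      linear_combination h
  · by_cases hcase2 : (α₂ - 1) / 8 * a = -((α₁ - 1) / 8)
    · have key3 : ∀ z : ℂ,
          (α₁ - (a + b * α₁)) * Complex.exp ((α₁ - 1) / 8 * z)
            + (Complex.exp ((α₂ - 1) * b / 8) * (1 - (a + b) * α₂))
              * Complex.exp (-((α₁ - 1) / 8) * z)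
            + ((Complex.exp ((α₂ - 1) * b / 8) * ((a + b * α₁) * α₂ - α₁)) + ((a + b) - 1))
              * Complex.exp ((0 : ℂ) * z) = 0 := by
        intro z
        have h := key z
        rw [hcase2, show (α₁ - 1) / 8 + -((α₁ - 1) / 8) = (0 : ℂ) from by ring] at h
        linear_combination h
      obtain ⟨hB, hC, -⟩ := exp3_indep _ _ _ _ _ _
        (fun h => hc1 (by linear_combination h / 2))
        hc1
        (neg_ne_zero.mpr hc1) key3
      have h2 : 1 - (a + b) * α₂ = 0 := by
        rcases mul_eq_zero.mp hC with h | h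
        · exact absurd h (Complex.exp_ne_zero _)
        · exact h
      have hlin : (α₂ - 1) * a + (α₁ - 1) = 0 := by linear_combination 8 * hcase2
      have final : (α₂ - α₁) * (α₁ * α₂ - 1) = 0 := by
        linear_combination (α₂ - 1) * α₂ * hB - (α₂ - 1) * α₁ * h2 + α₂ * (1 - α₁) * hlin
      rcases mul_eq_zero.mp final with h | h
      · exact Or.inl (sub_eq_zero.mp h)
      · refine Or.inr ?_
        rw [eq_div_iff h₁0]
        linear_combination h
    · obtain ⟨-, hB, -, hD⟩ := exp4_indep _ _ _ _ _ _ _ _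
        (fun h => hc2a (by linear_combination h))
        (fun h => hc1 (by linear_combination h))
        (fun h => hcase2 (by linear_combination h))
        (fun h => hcase1 (by linear_combination -h))
        hc1 hc2a key
      have h0 : a * (1 - α₁) = 0 := by linear_combination -hB - α₁ * hD
      rcases mul_eq_zero.mp h0 with h | h
      · exact absurd h ha
      · exact absurd (by linear_combination -h : α₁ = 1) h₁1
end

section
/- Let α ∈ ℂ ∖ {0, 1} and let z ∈ ℂ with z ≠ 0 be such that α·exp((α−1)z/8) ≠ 1, T_α(z) = z, and the derivative of T_α at z equals 1/8 (i.e. z is a nonzero fixed point of T_α with multiplier 1/8). Then exp((α−1)z/8) = 1/α² and z = 1 + 1/α. In particular, T_α has at most one nonzero fixed point with multiplier 1/8. -/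
open Filter

/-- A nonzero fixed point of `T_α` with multiplier `1/8` satisfies
`e^{(α−1)z/8} = 1/α²` and `z = 1 + 1/α`; in particular it is unique. -/
theorem nonzero_fixed_point_multiplier (α z : ℂ) (hα0 : α ≠ 0) (hα1 : α ≠ 1) (hz : z ≠ 0)
    (hpole : α * Complex.exp ((α - 1) * z / 8) ≠ 1)
    (hfix : T α z = z) (hder : deriv (T α) z = 1 / 8) :
    Complex.exp ((α - 1) * z / 8) = 1 / α ^ 2 ∧ z = 1 + 1 / α := by
  set w := Complex.exp ((α - 1) * z / 8) with hw
  have hwne : w ≠ 0 := Complex.exp_ne_zero _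
  have hden : α * w - 1 ≠ 0 := sub_ne_zero.mpr hpole
  have h1 : HasDerivAt (fun y : ℂ => (α - 1) * y / 8) ((α - 1) / 8) z := by
    have := (hasDerivAt_id z).const_mul ((α - 1) / 8)
    simpa [mul_comm, mul_div_assoc, div_mul_eq_mul_div] using this
  have h2 : HasDerivAt (fun y : ℂ => Complex.exp ((α - 1) * y / 8)) (w * ((α - 1) / 8)) z :=
    h1.cexp
  have hnum : HasDerivAt (fun y : ℂ => Complex.exp ((α - 1) * y / 8) - 1)
      (w * ((α - 1) / 8)) z := h2.sub_const 1
  have hd : HasDerivAt (fun y : ℂ => α * Complex.exp ((α - 1) * y / 8) - 1)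
      (α * (w * ((α - 1) / 8))) z := (h2.const_mul α).sub_const 1
  have hT : HasDerivAt (T α)
      ((w * ((α - 1) / 8) * (α * w - 1) - (w - 1) * (α * (w * ((α - 1) / 8)))) /
        (α * w - 1) ^ 2) z := by
    have := hnum.div hd hden
    exact this
  have hE : (w * ((α - 1) / 8) * (α * w - 1) - (w - 1) * (α * (w * ((α - 1) / 8)))) /
      (α * w - 1) ^ 2 = 1 / 8 := by rw [← hT.deriv]; exact hder
  have hpol : (α ^ 2 * w - 1) * (w - 1) = 0 := by
    have h8 : (8 : ℂ) ≠ 0 := by norm_num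
    rw [div_eq_iff (pow_ne_zero 2 hden)] at hE
    linear_combination -8 * hE
  have hwval : w = 1 / α ^ 2 := by
    rcases mul_eq_zero.mp hpol with h | h
    · field_simp
      linear_combination h
    · exfalso
      have hw1 : w = 1 := sub_eq_zero.mp h
      rw [T, ← hw, hw1] at hfix
      simp at hfix
      exact hz hfix.symm
  refine ⟨hwval, ?_⟩
  rw [T, ← hw, hwval] at hfix
  have hα2 : α ^ 2 ≠ 0 := pow_ne_zero 2 hα0
  have hd2 : α * (1 / α ^ 2) - 1 ≠ 0 := by rw [hwval] at hden; exact hden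
  rw [← hfix]
  field_simp
  ring
end

section
/- There exists α₀ < 0 such that for every real α with α₀ < α < 0, the map T_α has a nonzero attracting real fixed point: there exists p ∈ ℝ with p ≠ 0, α·exp((α−1)p/8) ≠ 1, T_α(p) = p, and 0 < T_α′(p) < 1 (the derivative taken at p). -/
open Filter

lemma exp_ge_pow4 (x : ℝ) (hx : 0 ≤ x) : x^4/256 ≤ Real.exp x := by
  have h1 : x/4 + 1 ≤ Real.exp (x/4) := Real.add_one_le_exp _
  have h2 : (x/4)^4 ≤ (x/4+1)^4 := by
    apply pow_le_pow_left₀ (by positivity); linarith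
  have h3 : (x/4+1)^4 ≤ (Real.exp (x/4))^4 :=
    pow_le_pow_left₀ (by positivity) h1 4
  have h4 : (Real.exp (x/4))^4 = Real.exp x := by
    rw [← Real.exp_nat_mul]; ring_nf
  calc x^4/256 = (x/4)^4 := by ring
    _ ≤ (x/4+1)^4 := h2
    _ ≤ (Real.exp (x/4))^4 := h3
    _ = Real.exp x := h4

set_option maxHeartbeats 2000000 in
/-- For all negative real `α` close enough to `0`, `T_α` has a nonzero
attracting real fixed point. -/
theorem exists_attracting_real_fixed_point :
    ∃ α₀ : ℝ, α₀ < 0 ∧ ∀ α : ℝ, α₀ < α → α < 0 →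
      ∃ p : ℝ, p ≠ 0 ∧ (α : ℂ) * Complex.exp (((α : ℂ) - 1) * (p : ℂ) / 8) ≠ 1 ∧
        T (α : ℂ) (p : ℂ) = (p : ℂ) ∧
        ∃ d : ℝ, deriv (T (α : ℂ)) (p : ℂ) = (d : ℂ) ∧ 0 < d ∧ d < 1 := by
  refine ⟨-1/2000, by norm_num, fun α hα hα0 => ?_⟩
  set β : ℝ := -α with hβdef
  have hβ0 : 0 < β := by simp only [hβdef]; linarith
  have hβ1 : β < 1/2000 := by simp only [hβdef]; linarith
  have hβα : α = -β := by rw [hβdef]; ring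
  clear_value β
  set ε₀ : ℝ := Real.exp (-(1/(4*β))) with hε₀def
  clear_value ε₀
  have hε₀pos : 0 < ε₀ := by rw [hε₀def]; exact Real.exp_pos _
  have hε₀β : ε₀ ≤ β := by
    have hβ3 : β^3 ≤ 1/8000000000 := by
      have := pow_le_pow_left₀ hβ0.le hβ1.le 3
      norm_num at this ⊢; linarith
    have hexpβ : 1/β ≤ Real.exp (1/(4*β)) := by
      have h := exp_ge_pow4 (1/(4*β)) (by positivity)
      have h2 : 1/β ≤ (1/(4*β))^4/256 := by
        rw [div_le_div_iff₀ hβ0 (by norm_num),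
          show (1/(4*β))^4 = 1/(256*β^4) by field_simp; ring]
        rw [div_mul_eq_mul_div, le_div_iff₀ (by positivity)]
        nlinarith [mul_le_mul_of_nonneg_right hβ3 hβ0.le, pow_pos hβ0 4]
      linarith
    rw [hε₀def, Real.exp_neg, inv_le_comm₀ (Real.exp_pos _) hβ0, ← one_div]
    exact hexpβ
  set ψ : ℝ → ℝ := fun ε => Real.exp ((β+1)*(1-ε)/(8*β)) * ε - (β+1-ε)/β with hψdef
  have hcont : ContinuousOn ψ (Set.Icc ε₀ (4*β)) := by
    apply Continuous.continuousOn
    rw [hψdef]; fun_prop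
  clear_value ψ
  have hlo : ψ ε₀ ≤ 0 := by
    simp only [hψdef]
    have h1 : Real.exp ((β+1)*(1-ε₀)/(8*β)) * ε₀
        = Real.exp ((β+1)*(1-ε₀)/(8*β) + -(1/(4*β))) := by
      rw [Real.exp_add, hε₀def]
    have h2 : (β+1)*(1-ε₀)/(8*β) + -(1/(4*β)) ≤ 0 := by
      rw [show (β+1)*(1-ε₀)/(8*β) + -(1/(4*β)) = ((β+1)*(1-ε₀) - 2)/(8*β) by
        field_simp; ring]
      apply div_nonpos_of_nonpos_of_nonneg _ (by positivity)
      nlinarith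
    have h3 : Real.exp ((β+1)*(1-ε₀)/(8*β)) * ε₀ ≤ 1 := by
      rw [h1]; exact Real.exp_le_one_iff.mpr h2
    have h4 : 1 ≤ (β+1-ε₀)/β := by
      rw [le_div_iff₀ hβ0]; nlinarith
    linarith
  have hhi : 0 ≤ ψ (4*β) := by
    simp only [hψdef]
    set x := (β+1)*(1-4*β)/(8*β) with hxdef
    have hx9 : 1/(9*β) ≤ x := by
      rw [hxdef, div_le_div_iff₀ (by positivity) (by positivity)]
      have h27 : 27*β + 36*β^2 ≤ 1 := by nlinarith
      nlinarith [mul_le_mul_of_nonneg_left h27 hβ0.le]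
    have hx0 : (0:ℝ) ≤ x := le_trans (by positivity) hx9
    have h4 : (1/(9*β))^4/256 ≤ Real.exp x := by
      have hp : (1/(9*β))^4 ≤ x^4 := pow_le_pow_left₀ (by positivity) hx9 4
      have := exp_ge_pow4 x hx0
      linarith
    have h4' : 1/(1679616*β^4) ≤ Real.exp x := by
      rw [show (1/(9*β))^4/256 = 1/(1679616*β^4) by field_simp; ring] at h4
      exact h4
    have h5 : 1 ≤ Real.exp x * (1679616*β^4) :=
      (div_le_iff₀ (by positivity)).mp h4'
    have hβ2 : 1679616*β^4 ≤ (42/100)*β^2 := by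
      have hb2 : β^2 < 1/4000000 := by nlinarith
      nlinarith [mul_le_mul_of_nonneg_left hb2.le (sq_nonneg β)]
    have h6 : 1 ≤ (42/100)*β^2 * Real.exp x := by
      nlinarith [Real.exp_pos x]
    rw [sub_nonneg, div_le_iff₀ hβ0]
    nlinarith [Real.exp_pos x]
  have hle : ε₀ ≤ 4*β := by linarith
  have hivt := intermediate_value_Icc hle hcont
  have h0mem : (0:ℝ) ∈ Set.Icc (ψ ε₀) (ψ (4*β)) := ⟨hlo, hhi⟩
  obtain ⟨ε, hεmem, hψε⟩ := hivt h0mem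
  obtain ⟨hεlo, hεhi⟩ := hεmem
  have hεpos : 0 < ε := lt_of_lt_of_le hε₀pos hεlo
  have hεlt1 : ε < 1 := by linarith
  -- the fixed point
  set p : ℝ := -(1-ε)/β with hpdef
  clear_value p
  have hpneg : p < 0 := by
    rw [hpdef]
    apply div_neg_of_neg_of_pos (by linarith) hβ0
  have hαp : 1 - α*p = ε := by
    rw [hpdef, hβα]; field_simp; ring
  have h1p : 1 - p = (β+1-ε)/β := by
    rw [hpdef]; field_simp; ring
  set E : ℝ := Real.exp ((α-1)*p/8) with hEdef
  clear_value E
  have hEpos : 0 < E := by rw [hEdef]; exact Real.exp_pos _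
  have harg : (α-1)*p/8 = (β+1)*(1-ε)/(8*β) := by
    rw [hpdef, hβα]; field_simp; ring
  -- real fixed point equation
  have hfix : E * (1 - α*p) = 1 - p := by
    rw [hEdef, harg, hαp, h1p]
    have := hψε
    simp only [hψdef] at this
    linarith
  have hfix' : E * ε = 1 - p := by rw [← hαp]; exact hfix
  -- denominator nonzero (real)
  have hden : α * E - 1 ≠ 0 := by nlinarith
  -- cast facts
  have hargC : ((α:ℂ) - 1) * (p:ℂ) / 8 = (((α-1)*p/8 : ℝ) : ℂ) := by push_cast; ring
  have hexpC : Complex.exp (((α:ℂ) - 1) * (p:ℂ) / 8) = ((E:ℝ):ℂ) := by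
    rw [hargC, hEdef, Complex.ofReal_exp]
  have hdenC : (α:ℂ) * ((E:ℝ):ℂ) - 1 ≠ 0 := by
    intro h
    apply hden
    have : (((α*E - 1 : ℝ)):ℂ) = 0 := by push_cast; linear_combination h
    exact_mod_cast this
  refine ⟨p, ne_of_lt hpneg, ?_, ?_, ?_⟩
  · -- α E ≠ 1
    rw [hexpC]
    intro h
    exact hdenC (by rw [h]; ring)
  · -- fixed point
    unfold T
    rw [hexpC, div_eq_iff hdenC]
    have hfixC : ((E:ℝ):ℂ) * (1 - (α:ℂ)*(p:ℂ)) = 1 - (p:ℂ) := by exact_mod_cast hfix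
    linear_combination hfixC
  · -- derivative
    clear hivt h0mem hcont hlo hhi hψε hψdef
    set d : ℝ := (1-p)*ε/8 with hddef
    clear_value d
    have hd1p : 0 < 1 - p := by linarith
    have hdpos : 0 < d := by rw [hddef]; positivity
    have hdlt1 : d < 1 := by
      rw [hddef, h1p, div_mul_eq_mul_div, div_div, div_lt_one (by positivity)]
      have h1 : (β+1-ε)*ε ≤ (β+1)*(4*β) :=
        mul_le_mul (by linarith) hεhi hεpos.le (by linarith)
      nlinarith
    refine ⟨d, ?_, hdpos, hdlt1⟩
    -- HasDerivAt computation
    have hlin : HasDerivAt (fun z : ℂ => ((α:ℂ)-1) * z / 8) (((α:ℂ)-1)/8) (p:ℂ) := by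
      simpa using ((hasDerivAt_id (p:ℂ)).const_mul ((α:ℂ)-1)).div_const 8
    have hexp : HasDerivAt (fun z : ℂ => Complex.exp (((α:ℂ)-1) * z / 8))
        (Complex.exp (((α:ℂ)-1) * (p:ℂ) / 8) * (((α:ℂ)-1)/8)) (p:ℂ) :=
      (Complex.hasDerivAt_exp _).comp _ hlin
    rw [hexpC] at hexp
    have hN : HasDerivAt (fun z : ℂ => Complex.exp (((α:ℂ)-1) * z / 8) - 1)
        (((E:ℝ):ℂ) * (((α:ℂ)-1)/8)) (p:ℂ) := hexp.sub_const 1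
    have hD : HasDerivAt (fun z : ℂ => (α:ℂ) * Complex.exp (((α:ℂ)-1) * z / 8) - 1)
        ((α:ℂ) * (((E:ℝ):ℂ) * (((α:ℂ)-1)/8))) (p:ℂ) := (hexp.const_mul _).sub_const 1
    have hDp : (fun z : ℂ => (α:ℂ) * Complex.exp (((α:ℂ)-1) * z / 8) - 1) (p:ℂ) ≠ 0 := by
      simpa [hexpC] using hdenC
    have hT : HasDerivAt (T (α:ℂ))
        ((((E:ℝ):ℂ) * (((α:ℂ)-1)/8) * ((α:ℂ) * Complex.exp (((α:ℂ)-1) * (p:ℂ) / 8) - 1)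
          - (Complex.exp (((α:ℂ)-1) * (p:ℂ) / 8) - 1) * ((α:ℂ) * (((E:ℝ):ℂ) * (((α:ℂ)-1)/8))))
          / ((α:ℂ) * Complex.exp (((α:ℂ)-1) * (p:ℂ) / 8) - 1)^2) (p:ℂ) := by
      have := hN.div hD hDp
      exact this
    rw [hT.deriv, hexpC]
    -- now a pure algebraic identity over ℂ, from the real fixed-point equation
    have hfixC : ((E:ℝ):ℂ) * ((1:ℂ) - (α:ℂ)*(p:ℂ)) = 1 - (p:ℂ) := by exact_mod_cast hfix
    have hεC : (1:ℂ) - (α:ℂ)*(p:ℂ) = ((ε:ℝ):ℂ) := by exact_mod_cast hαp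
    have hdC : ((d:ℝ):ℂ) = (1 - (p:ℂ)) * ((ε:ℝ):ℂ) / 8 := by
      rw [hddef]; push_cast; ring
    rw [hdC]
    have hgC : ((ε:ℝ):ℂ) * ((α:ℂ) * ((E:ℝ):ℂ) - 1) = (α:ℂ) - 1 := by
      rw [← hεC]
      linear_combination (α:ℂ) * hfixC
    have hfix'C : ((E:ℝ):ℂ) * ((ε:ℝ):ℂ) = 1 - (p:ℂ) := by exact_mod_cast hfix'
    rw [div_eq_iff (pow_ne_zero 2 hdenC)]
    linear_combination (-(((E:ℝ):ℂ)*(((α:ℂ)-1)+((ε:ℝ):ℂ)*((α:ℂ)*((E:ℝ):ℂ)-1))/8)) * hgC + (((ε:ℝ):ℂ)*((α:ℂ)*((E:ℝ):ℂ)-1)^2/8) * hfix'C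
end

section
/- Let α ∈ ℝ with α > 0 and α ≠ 1, and let x ∈ ℝ with x > 0. Then α·exp((α−1)x/8) ≠ 1 and 0 < T_α(x) < x. Consequently, the orbit of any x > 0 under T_α is well-defined, strictly decreasing, and converges to 0; in particular for α > 0 the point 1/α lies in the basin of attraction of the fixed point 0. -/
open Filter

noncomputable def tR (α x : ℝ) : ℝ :=
  (Real.exp ((α - 1) * x / 8) - 1) / (α * Real.exp ((α - 1) * x / 8) - 1)

lemma keyR (α : ℝ) (hα : 0 < α) (hα1 : α ≠ 1) (x : ℝ) (hx : 0 < x) :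
    α * Real.exp ((α - 1) * x / 8) ≠ 1 ∧ 0 < tR α x ∧ tR α x < x / 2 := by
  have hupos : 0 < Real.exp ((α - 1) * x / 8) := Real.exp_pos _
  set u := Real.exp ((α - 1) * x / 8) with hu
  rcases lt_or_gt_of_ne hα1 with h | h
  · -- α < 1
    have hcx : (α - 1) * x / 8 < 0 := by nlinarith
    have hu1 : u < 1 := by rw [hu]; exact Real.exp_lt_one_iff.mpr hcx
    have hlin : (α - 1) * x / 8 + 1 < u := by
      rw [hu]; exact Real.add_one_lt_exp (by nlinarith)
    -- key inequality
    have hkey : 2 - x < u * (2 - x * α) := by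
      rcases lt_or_ge 0 (2 - x * α) with h2 | h2
      · nlinarith [mul_lt_mul_of_pos_right hlin h2,
          mul_pos (mul_pos hx (by linarith : (0:ℝ) < 1 - α)) (by nlinarith : (0:ℝ) < 6 + x * α)]
      · nlinarith [mul_nonpos_of_nonneg_of_nonpos (by linarith : (0:ℝ) ≤ 1 - u) h2,
          mul_pos hx (by linarith : (0:ℝ) < 1 - α)]
    have hden : α * u - 1 < 0 := by nlinarith
    refine ⟨by intro hh; nlinarith, ?_, ?_⟩
    · exact div_pos_of_neg_of_neg (by linarith) hden
    · rw [tR, ← hu, div_lt_iff_of_neg hden]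
      nlinarith
  · -- α > 1
    have hcx : 0 < (α - 1) * x / 8 := by nlinarith
    have hu1 : 1 < u := by rw [hu]; exact Real.one_lt_exp_iff.mpr hcx
    have hden : 0 < α * u - 1 := by nlinarith
    have hkey : u * (2 - x * α) < 2 - x := by
      rcases lt_or_ge (x * α) 2 with h2 | h2
      · have h2' : 0 < 2 - x * α := by linarith
        have hc1 : 0 < 1 - (α - 1) * x / 8 := by nlinarith
        have hinv : 1 - (α - 1) * x / 8 < u⁻¹ := by
          have := Real.add_one_lt_exp (x := -((α - 1) * x / 8)) (by nlinarith)
          rw [Real.exp_neg, ← hu] at this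
          linarith
        have hub : u * (1 - (α - 1) * x / 8) < 1 := by
          have := (mul_lt_mul_iff_right₀ hupos).mpr hinv
          rwa [mul_inv_cancel₀ (ne_of_gt hupos)] at this
        nlinarith [mul_lt_mul_of_pos_right hub h2',
          mul_pos (mul_pos hx (by linarith : (0:ℝ) < α - 1)) (by linarith : (0:ℝ) < 6 + x),
          mul_pos hc1 h2']
      · nlinarith [mul_nonpos_of_nonneg_of_nonpos (by linarith : (0:ℝ) ≤ u - 1) (by linarith : 2 - x * α ≤ 0),
          mul_pos hx (by linarith : (0:ℝ) < α - 1)]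
    refine ⟨by intro hh; nlinarith, ?_, ?_⟩
    · exact div_pos (by linarith) hden
    · rw [tR, ← hu, div_lt_iff₀ hden]
      nlinarith

lemma bridgeT (α x : ℝ) : T (α : ℂ) (x : ℂ) = ((tR α x : ℝ) : ℂ) := by
  rw [T, tR]
  push_cast [Complex.ofReal_exp]
  norm_num

lemma iterT (α x : ℝ) (n : ℕ) : (T (α : ℂ))^[n] (x : ℂ) = (((tR α)^[n] x : ℝ) : ℂ) := by
  induction n with
  | zero => simp
  | succ n ih => rw [Function.iterate_succ_apply', Function.iterate_succ_apply', ih, bridgeT]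

lemma noPoleC (α : ℝ) (hα : 0 < α) (hα1 : α ≠ 1) (x : ℝ) (hx : 0 < x) :
    (α : ℂ) * Complex.exp (((α : ℂ) - 1) * (x : ℂ) / 8) ≠ 1 := by
  have h : (α : ℂ) * Complex.exp (((α : ℂ) - 1) * (x : ℂ) / 8)
      = ((α * Real.exp ((α - 1) * x / 8) : ℝ) : ℂ) := by
    push_cast [Complex.ofReal_exp]; ring_nf
  rw [h]
  exact_mod_cast (keyR α hα hα1 x hx).1

lemma orbit_bounds (α : ℝ) (hα : 0 < α) (hα1 : α ≠ 1) (x : ℝ) (hx : 0 < x) (n : ℕ) :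
    0 < (tR α)^[n] x ∧ (tR α)^[n] x ≤ x / 2 ^ n := by
  induction n with
  | zero => simpa using hx
  | succ n ih =>
    rw [Function.iterate_succ_apply']
    obtain ⟨hp, hb⟩ := ih
    obtain ⟨-, hp', hb'⟩ := keyR α hα hα1 _ hp
    constructor
    · exact hp'
    · have : (tR α)^[n] x / 2 ≤ x / 2 ^ (n + 1) := by
        rw [pow_succ]
        calc (tR α)^[n] x / 2 ≤ (x / 2 ^ n) / 2 := by linarith
        _ = x / (2 ^ n * 2) := by ring
      linarith

lemma part2 (α : ℝ) (hα : 0 < α) (hα1 : α ≠ 1) (x : ℝ) (hx : 0 < x) :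
    orbitWD (α : ℂ) (x : ℂ) ∧
    StrictAnti (fun n : ℕ => ((T (α : ℂ))^[n] (x : ℂ)).re) ∧
    Tendsto (fun n : ℕ => (T (α : ℂ))^[n] (x : ℂ)) atTop (nhds 0) := by
  refine ⟨?_, ?_, ?_⟩
  · intro n
    rw [iterT]
    exact noPoleC α hα hα1 _ (orbit_bounds α hα hα1 x hx n).1
  · apply strictAnti_nat_of_succ_lt
    intro n
    simp only [Function.iterate_succ_apply', iterT, bridgeT, Complex.ofReal_re]
    have hp := (orbit_bounds α hα hα1 x hx n).1
    have := (keyR α hα hα1 _ hp).2.2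
    linarith
  · have hf : Tendsto (fun n : ℕ => (tR α)^[n] x) atTop (nhds 0) := by
      apply squeeze_zero (fun n => ((orbit_bounds α hα hα1 x hx n).1).le)
        (fun n => (orbit_bounds α hα hα1 x hx n).2)
      have : Tendsto (fun n : ℕ => x * (1/2 : ℝ) ^ n) atTop (nhds (x * 0)) :=
        (tendsto_pow_atTop_nhds_zero_of_lt_one (by norm_num) (by norm_num)).const_mul x
      simpa [div_eq_mul_inv, inv_pow] using this
    have h2 := (Complex.continuous_ofReal.tendsto 0).comp hf
    simp only [Function.comp_def] at h2
    have heq : (fun n : ℕ => (T (α : ℂ))^[n] (x : ℂ))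
        = fun n : ℕ => (((tR α)^[n] x : ℝ) : ℂ) := funext (iterT α x)
    rw [heq]
    simpa using h2


/-- For real `α > 0`, `α ≠ 1`, and real `x > 0`: `x` is not a pole of `T_α`,
`T_α(x)` is real with `0 < T_α(x) < x`; consequently the orbit of any `x > 0` is
well-defined, strictly decreasing, and converges to `0`; in particular `1/α` lies in the
basin of attraction of `0`. -/
theorem positive_real_axis_in_basin (α : ℝ) (hα : 0 < α) (hα1 : α ≠ 1) :
    (∀ x : ℝ, 0 < x →
      (α : ℂ) * Complex.exp (((α : ℂ) - 1) * (x : ℂ) / 8) ≠ 1 ∧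
      ∃ y : ℝ, T (α : ℂ) (x : ℂ) = (y : ℂ) ∧ 0 < y ∧ y < x) ∧
    (∀ x : ℝ, 0 < x →
      orbitWD (α : ℂ) (x : ℂ) ∧
      StrictAnti (fun n : ℕ => ((T (α : ℂ))^[n] (x : ℂ)).re) ∧
      Tendsto (fun n : ℕ => (T (α : ℂ))^[n] (x : ℂ)) atTop (nhds 0)) ∧
    (orbitWD (α : ℂ) (1 / (α : ℂ)) ∧
      Tendsto (fun n : ℕ => (T (α : ℂ))^[n] (1 / (α : ℂ))) atTop (nhds 0)) := by
  refine ⟨fun x hx => ⟨noPoleC α hα hα1 x hx, tR α x, bridgeT α x,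
      (keyR α hα hα1 x hx).2.1, by have := (keyR α hα hα1 x hx).2.2; linarith⟩,
    fun x hx => part2 α hα hα1 x hx, ?_⟩
  have h : (1 / (α : ℂ)) = ((1 / α : ℝ) : ℂ) := by push_cast; ring
  rw [h]
  have hp := part2 α hα hα1 (1 / α) (by positivity)
  exact ⟨hp.1, hp.2.2⟩
end

section
/- The function f(x) = 2x·log(1/x)/(1 − x²) is strictly increasing on the open interval (0, 1), tends to 0 as x → 0⁺ and tends to 1 as x → 1⁻; in particular f maps (0, 1) bijectively onto (0, 1), and there is a unique p ∈ (0, 1) with f(p) = 1/8. -/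
open Filter Set

private lemma aux_log_lt (x : ℝ) (hx0 : 0 < x) (hx1 : x < 1) :
    (1 + x ^ 2) * Real.log x + 1 - x ^ 2 < 0 := by
  set h : ℝ → ℝ := fun t => Real.log t - (t ^ 2 - 1) / (t ^ 2 + 1) with hh
  have hmono : StrictMonoOn h (Set.Ioc 0 1) := by
    apply strictMonoOn_of_deriv_pos (convex_Ioc 0 1)
    · apply ContinuousOn.sub
      · exact Real.continuousOn_log.mono (fun t ht => by
          simp only [mem_compl_iff, mem_singleton_iff]; exact ne_of_gt ht.1)
      · exact ContinuousOn.div ((continuousOn_pow 2).sub continuousOn_const)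
          ((continuousOn_pow 2).add continuousOn_const)
          (fun t _ => by positivity)
    · intro t ht
      rw [interior_Ioc] at ht
      obtain ⟨ht0, ht1⟩ := ht
      have hden : (t ^ 2 + 1) ≠ 0 := by positivity
      have hd : HasDerivAt h
          (1 / t - ((2 * t) * (t ^ 2 + 1) - (t ^ 2 - 1) * (2 * t)) / (t ^ 2 + 1) ^ 2) t := by
        have h1 : HasDerivAt Real.log (1 / t) t := by
          simpa [one_div] using Real.hasDerivAt_log (ne_of_gt ht0)
        have h2 : HasDerivAt (fun t : ℝ => t ^ 2 - 1) (2 * t) t := by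
          simpa using (hasDerivAt_pow 2 t).sub_const 1
        have h3 : HasDerivAt (fun t : ℝ => t ^ 2 + 1) (2 * t) t := by
          simpa using (hasDerivAt_pow 2 t).add_const 1
        exact h1.sub (h2.div h3 hden)
      rw [hd.deriv]
      rw [sub_pos, div_lt_div_iff₀ (by positivity) ht0]
      nlinarith [sq_nonneg (t ^ 2 - 1), sq_nonneg t, sq_nonneg (t - 1), sq_nonneg (t + 1)]
  have h1 : h x < h 1 := hmono ⟨hx0, le_of_lt hx1⟩ ⟨one_pos, le_refl 1⟩ hx1
  have h2 : h 1 = 0 := by simp [hh]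
  rw [h2, hh] at h1
  simp only [sub_neg] at h1
  rw [lt_div_iff₀ (by positivity : (0:ℝ) < x ^ 2 + 1)] at h1
  nlinarith

private noncomputable def gfun : ℝ → ℝ := fun x => -(2 * x * Real.log x) / (1 - x ^ 2)

private lemma gcont : ContinuousOn gfun (Set.Ioo 0 1) := by
  apply ContinuousOn.div
  · exact ((continuousOn_const.mul continuousOn_id).mul
      (Real.continuousOn_log.mono (fun t ht => by
        simp only [mem_compl_iff, mem_singleton_iff]; exact ne_of_gt ht.1))).neg
  · exact continuousOn_const.sub (continuousOn_pow 2)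
  · intro t ht
    nlinarith [ht.1, ht.2]

private lemma gmono : StrictMonoOn gfun (Set.Ioo 0 1) := by
  apply strictMonoOn_of_deriv_pos (convex_Ioo 0 1) gcont
  intro x hx
  rw [interior_Ioo] at hx
  obtain ⟨hx0, hx1⟩ := hx
  have hden : (1 - x ^ 2) ≠ 0 := by nlinarith
  have hu : HasDerivAt (fun t : ℝ => -(2 * t * Real.log t)) (-(2 * Real.log x + 2)) x := by
    have h1 : HasDerivAt (fun t : ℝ => 2 * t) 2 x := by
      simpa using (hasDerivAt_id x).const_mul 2
    have h2 := h1.mul (Real.hasDerivAt_log (ne_of_gt hx0))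
    have : 2 * Real.log x + 2 * x * x⁻¹ = 2 * Real.log x + 2 := by
      field_simp
    rw [this] at h2
    exact h2.neg
  have hv : HasDerivAt (fun t : ℝ => 1 - t ^ 2) (-(2 * x)) x := by
    simpa using ((hasDerivAt_pow 2 x).const_sub 1)
  have hg : HasDerivAt gfun
      ((-(2 * Real.log x + 2) * (1 - x ^ 2) - -(2 * x * Real.log x) * -(2 * x))
        / (1 - x ^ 2) ^ 2) x :=
    hu.div hv hden
  rw [hg.deriv]
  apply div_pos
  · nlinarith [aux_log_lt x hx0 hx1]
  · positivity

private lemma feq (x : ℝ) :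
    2 * x * Real.log (1 / x) / (1 - x ^ 2) = gfun x := by
  unfold gfun
  rw [one_div, Real.log_inv]; ring_nf

private lemma L0 : Tendsto (fun x : ℝ => 2 * x * Real.log (1 / x) / (1 - x ^ 2))
    (nhdsWithin 0 (Set.Ioi 0)) (nhds 0) := by
  have h1 : Tendsto (fun x : ℝ => Real.log x * x) (nhdsWithin 0 (Set.Ioi 0)) (nhds 0) := by
    simpa [Real.rpow_one] using tendsto_log_mul_rpow_nhdsGT_zero one_pos
  have h2 : Tendsto (fun x : ℝ => 1 - x ^ 2) (nhdsWithin 0 (Set.Ioi 0)) (nhds 1) := by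
    have : Tendsto (fun x : ℝ => 1 - x ^ 2) (nhds 0) (nhds 1) := by
      have h := Continuous.tendsto (f := fun x : ℝ => 1 - x ^ 2) (by fun_prop) 0
      simpa using h
    exact this.mono_left nhdsWithin_le_nhds
  have h3 : Tendsto (fun x : ℝ => (-2 * (Real.log x * x)) / (1 - x ^ 2))
      (nhdsWithin 0 (Set.Ioi 0)) (nhds 0) := by
    have := ((h1.const_mul (-2)).div h2 one_ne_zero)
    simpa [Pi.div_def] using this
  apply h3.congr'
  filter_upwards [self_mem_nhdsWithin] with x hx
  rw [one_div, Real.log_inv]; ring_nf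

private lemma L1 : Tendsto (fun x : ℝ => 2 * x * Real.log (1 / x) / (1 - x ^ 2))
    (nhdsWithin 1 (Set.Iio 1)) (nhds 1) := by
  have hslope : Tendsto (slope Real.log 1) (nhdsWithin 1 {(1:ℝ)}ᶜ) (nhds 1) := by
    have := Real.hasDerivAt_log one_ne_zero
    rw [hasDerivAt_iff_tendsto_slope] at this
    simpa using this
  have hslope' : Tendsto (slope Real.log 1) (nhdsWithin 1 (Set.Iio 1)) (nhds 1) :=
    hslope.mono_left (nhdsWithin_mono _ (fun y hy => ne_of_lt hy))
  have hfac : Tendsto (fun x : ℝ => 2 * x / (1 + x)) (nhdsWithin 1 (Set.Iio 1)) (nhds 1) := by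
    have hca : ContinuousAt (fun x : ℝ => 2 * x / (1 + x)) 1 := by
      apply ContinuousAt.div
      · fun_prop
      · fun_prop
      · norm_num
    have := hca.tendsto
    norm_num at this
    exact this.mono_left nhdsWithin_le_nhds
  have := hfac.mul hslope'
  rw [mul_one] at this
  apply this.congr'
  have hmem : Set.Ioo (0:ℝ) 1 ∈ nhdsWithin 1 (Set.Iio 1) := by
    rw [mem_nhdsWithin]
    exact ⟨Set.Ioi 0, isOpen_Ioi, by norm_num, fun y hy => ⟨hy.1, hy.2⟩⟩
  filter_upwards [hmem] with x hx
  rw [slope_def_field, Real.log_one, one_div, Real.log_inv]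
  have h1 : x - 1 ≠ 0 := by nlinarith [hx.2]
  have h2 : (1:ℝ) + x ≠ 0 := by nlinarith [hx.1]
  have h3 : (1:ℝ) - x ^ 2 ≠ 0 := by nlinarith [hx.1, hx.2]
  field_simp
  ring

/-- The function `f(x) = 2x·log(1/x)/(1 − x²)` is strictly increasing on
`(0,1)`, tends to `0` at `0⁺` and to `1` at `1⁻`; it maps `(0,1)` bijectively onto `(0,1)`,
and there is a unique `p ∈ (0,1)` with `f(p) = 1/8`. -/
theorem multiplier_function_properties :
    StrictMonoOn (fun x : ℝ => 2 * x * Real.log (1 / x) / (1 - x ^ 2)) (Set.Ioo 0 1) ∧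
    Tendsto (fun x : ℝ => 2 * x * Real.log (1 / x) / (1 - x ^ 2))
      (nhdsWithin 0 (Set.Ioi 0)) (nhds 0) ∧
    Tendsto (fun x : ℝ => 2 * x * Real.log (1 / x) / (1 - x ^ 2))
      (nhdsWithin 1 (Set.Iio 1)) (nhds 1) ∧
    Set.BijOn (fun x : ℝ => 2 * x * Real.log (1 / x) / (1 - x ^ 2))
      (Set.Ioo 0 1) (Set.Ioo 0 1) ∧
    ∃! p : ℝ, p ∈ Set.Ioo (0 : ℝ) 1 ∧
      2 * p * Real.log (1 / p) / (1 - p ^ 2) = 1 / 8 := by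
  set f : ℝ → ℝ := fun x => 2 * x * Real.log (1 / x) / (1 - x ^ 2) with hf
  have hfg : ∀ x : ℝ, f x = gfun x := fun x => feq x
  have fmono : StrictMonoOn f (Set.Ioo 0 1) := by
    intro x hx y hy hxy
    rw [hfg x, hfg y]
    exact gmono hx hy hxy
  have fcont : ContinuousOn f (Set.Ioo 0 1) := gcont.congr (fun x _ => hfg x)
  -- f is positive on (0,1)
  have fpos : ∀ x ∈ Set.Ioo (0:ℝ) 1, 0 < f x := by
    intro x hx
    apply div_pos
    · apply mul_pos (by linarith [hx.1])
      apply Real.log_pos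
      rw [lt_div_iff₀ hx.1]
      linarith [hx.2]
    · nlinarith [hx.1, hx.2]
  -- f is < 1 on (0,1)
  have flt : ∀ x ∈ Set.Ioo (0:ℝ) 1, f x < 1 := by
    intro x hx
    set y := (x + 1) / 2 with hy
    have hyI : y ∈ Set.Ioo (0:ℝ) 1 := ⟨by simp [hy]; linarith [hx.1], by simp [hy]; linarith [hx.2]⟩
    have hxy : x < y := by simp [hy]; linarith [hx.2]
    have h1 : f x < f y := fmono hx hyI hxy
    have h2 : f y ≤ 1 := by
      apply ge_of_tendsto L1
      have hmem : Set.Ioo y 1 ∈ nhdsWithin 1 (Set.Iio 1) := by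
        rw [mem_nhdsWithin]
        exact ⟨Set.Ioi y, isOpen_Ioi, hyI.2, fun z hz => ⟨hz.1, hz.2⟩⟩
      filter_upwards [hmem] with z hz
      exact le_of_lt (fmono hyI ⟨lt_trans hyI.1 hz.1, hz.2⟩ hz.1)
    linarith
  have fmaps : Set.MapsTo f (Set.Ioo 0 1) (Set.Ioo 0 1) :=
    fun x hx => ⟨fpos x hx, flt x hx⟩
  -- surjectivity
  have fsurj : Set.SurjOn f (Set.Ioo 0 1) (Set.Ioo 0 1) := by
    intro c hc
    obtain ⟨a, hfa, ha⟩ : ∃ a, f a < c ∧ a ∈ Set.Ioo (0:ℝ) 1 := by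
      have e1 : ∀ᶠ x in nhdsWithin 0 (Set.Ioi 0), f x < c := (tendsto_order.1 L0).2 c hc.1
      have e2 : ∀ᶠ x : ℝ in nhdsWithin 0 (Set.Ioi 0), x ∈ Set.Ioo (0:ℝ) 1 := by
        filter_upwards [self_mem_nhdsWithin,
          (eventually_lt_nhds (by norm_num : (0:ℝ) < 1)).filter_mono nhdsWithin_le_nhds]
          with x h1 h2
        exact ⟨h1, h2⟩
      exact (e1.and e2).exists
    obtain ⟨b, hfb, hb⟩ : ∃ b, c < f b ∧ b ∈ Set.Ioo (0:ℝ) 1 := by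
      have e1 : ∀ᶠ x in nhdsWithin 1 (Set.Iio 1), c < f x := (tendsto_order.1 L1).1 c hc.2
      have e2 : ∀ᶠ x : ℝ in nhdsWithin 1 (Set.Iio 1), x ∈ Set.Ioo (0:ℝ) 1 := by
        filter_upwards [self_mem_nhdsWithin,
          (eventually_gt_nhds (by norm_num : (0:ℝ) < 1)).filter_mono nhdsWithin_le_nhds]
          with x h1 h2
        exact ⟨h2, h1⟩
      exact (e1.and e2).exists
    have hab : a < b := by
      by_contra h
      push_neg at h
      have := fmono.monotoneOn hb ha h
      linarith
    have hsub : Set.Icc a b ⊆ Set.Ioo (0:ℝ) 1 :=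
      fun z hz => ⟨lt_of_lt_of_le ha.1 hz.1, lt_of_le_of_lt hz.2 hb.2⟩
    have := intermediate_value_Icc (le_of_lt hab) (fcont.mono hsub)
    obtain ⟨x, hx, hfx⟩ := this ⟨le_of_lt hfa, le_of_lt hfb⟩
    exact ⟨x, hsub hx, hfx⟩
  have fbij : Set.BijOn f (Set.Ioo 0 1) (Set.Ioo 0 1) := ⟨fmaps, fmono.injOn, fsurj⟩
  refine ⟨fmono, L0, L1, fbij, ?_⟩
  obtain ⟨p, hp, hfp⟩ := fsurj (show (1/8 : ℝ) ∈ Set.Ioo (0:ℝ) 1 by norm_num)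
  refine ⟨p, ⟨hp, hfp⟩, ?_⟩
  rintro q ⟨hq, hfq⟩
  have : f q = f p := by
    show 2 * q * Real.log (1 / q) / (1 - q ^ 2) = 2 * p * Real.log (1 / p) / (1 - p ^ 2)
    rw [hfq]; exact hfp.symm
  exact fmono.injOn hq hp this
end

section
/- Let P ⊆ ℂ be a closed discrete set and let f : ℂ ∖ P → ℂ be continuous, with |f(z)| → ∞ as z → p (within ℂ ∖ P) for every p ∈ P. Let v ∈ ℂ, δ₀ > 0, and let (T(δ))_{0<δ≤δ₀} be a family of subsets of ℂ ∖ P which is nested in the sense that T(δ₁) ⊆ T(δ₂) whenever 0 < δ₁ ≤ δ₂ ≤ δ₀, such that f(T(δ)) ⊆ {w ∈ ℂ : 0 < |w − v| < δ} for every δ ∈ (0, δ₀], and such that f(z) ≠ v for every z ∈ closure(T(δ₀)) ∖ P. Then for every R > 0 there exists δ ∈ (0, δ₀] such that |z| > R for every z ∈ T(δ). -/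
open Filter Set

/-- Tracts above small punctured disks around an isolated asymptotic value
lie in small neighborhoods of infinity. -/
theorem tracts_above_small_disks_are_small (P : Set ℂ) (hPclosed : IsClosed P)
    (hPdiscrete : DiscreteTopology ↥P) (f : ℂ → ℂ) (hf : ContinuousOn f Pᶜ)
    (hpole : ∀ p ∈ P, Tendsto (fun z => ‖f z‖) (nhdsWithin p Pᶜ) atTop)
    (v : ℂ) (δ₀ : ℝ) (hδ₀ : 0 < δ₀) (Tr : ℝ → Set ℂ)
    (hTP : ∀ δ ∈ Set.Ioc 0 δ₀, Tr δ ⊆ Pᶜ)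
    (hnest : ∀ δ₁ δ₂ : ℝ, 0 < δ₁ → δ₁ ≤ δ₂ → δ₂ ≤ δ₀ → Tr δ₁ ⊆ Tr δ₂)
    (himg : ∀ δ ∈ Set.Ioc 0 δ₀, ∀ z ∈ Tr δ,
      0 < ‖f z - v‖ ∧ ‖f z - v‖ < δ)
    (hne : ∀ z ∈ closure (Tr δ₀) \ P, f z ≠ v) :
    ∀ R > 0, ∃ δ ∈ Set.Ioc 0 δ₀, ∀ z ∈ Tr δ, R < ‖z‖ := by
  intro R hR
  by_contra hcon
  push_neg at hcon
  -- choose a sequence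
  have hδn : ∀ n : ℕ, δ₀ / (n + 1) ∈ Set.Ioc 0 δ₀ := by
    intro n
    constructor
    · positivity
    · rw [div_le_iff₀ (by positivity)]
      nlinarith [Nat.cast_nonneg (α := ℝ) n]
  choose z hz hzR using fun n : ℕ => hcon (δ₀ / (n + 1)) (hδn n)
  have hzT : ∀ n, z n ∈ Tr δ₀ := fun n =>
    hnest _ _ (hδn n).1 (hδn n).2 le_rfl (hz n)
  have hzP : ∀ n, z n ∈ Pᶜ := fun n => hTP _ (hδn n) (hz n)
  -- f(z n) → v
  have hfv : Tendsto (fun n => f (z n)) atTop (nhds v) := by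
    rw [tendsto_iff_norm_sub_tendsto_zero]
    have h0 : Tendsto (fun n : ℕ => δ₀ / (n + 1)) atTop (nhds 0) :=
      tendsto_const_nhds.div_atTop (tendsto_natCast_atTop_atTop.atTop_add tendsto_const_nhds)
    refine squeeze_zero (fun n => norm_nonneg _) (fun n => ?_) h0
    exact ((himg _ (hδn n) _ (hz n)).2).le
  -- compactness: extract a convergent subsequence
  have hcpt : IsCompact (Metric.closedBall (0 : ℂ) R) := isCompact_closedBall _ _
  have hmem : ∀ n, z n ∈ Metric.closedBall (0 : ℂ) R := by
    intro n
    rw [Metric.mem_closedBall, dist_zero_right]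
    exact (hzR n)
  obtain ⟨a, -, φ, hφ, ha⟩ := hcpt.tendsto_subseq hmem
  have hacl : a ∈ closure (Tr δ₀) :=
    mem_closure_of_tendsto ha (Eventually.of_forall fun k => hzT (φ k))
  have hfva : Tendsto (fun k => f (z (φ k))) atTop (nhds v) :=
    hfv.comp hφ.tendsto_atTop
  by_cases haP : a ∈ P
  · -- pole case: |f| → ∞ contradicts f → v
    have h1 : Tendsto (fun k => z (φ k)) atTop (nhdsWithin a Pᶜ) :=
      tendsto_nhdsWithin_of_tendsto_nhds_of_eventually_within _ ha
        (Eventually.of_forall fun k => hzP (φ k))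
    have h2 : Tendsto (fun k => ‖f (z (φ k))‖) atTop atTop :=
      (hpole a haP).comp h1
    have h3 : Tendsto (fun k => ‖f (z (φ k))‖) atTop (nhds ‖v‖) :=
      (continuous_norm.tendsto v).comp hfva
    exact not_tendsto_atTop_of_tendsto_nhds h3 h2
  · -- continuity case: f a = v contradicts hne
    have hopen : IsOpen Pᶜ := hPclosed.isOpen_compl
    have hca : ContinuousAt f a := hf.continuousAt (hopen.mem_nhds haP)
    have : Tendsto (fun k => f (z (φ k))) atTop (nhds (f a)) := hca.tendsto.comp ha
    have hfa : f a = v := tendsto_nhds_unique this hfva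
    exact hne a ⟨hacl, haP⟩ hfa
end
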